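/- Let q be a power of an odd prime and let G = 1 + 𝔤 be a pattern subgroup of UT_n(F_{q^k}), regarded over F_q, with † an involutive F_q-algebra antiautomorphism of 𝔤 satisfying (α e_ij)† ∈ F_{q^k}^× e_{j̄ ī} for all α ∈ F_{q^k}^×. Let U = {u ∈ G | u† = u⁻¹}, let 𝔥 = {x ∈ 𝔤 | x_ij = 0 if j ≤ n/2}, and let H = 1 + 𝔥. Then G = HU, i.e., every element of G can be written as hu with h ∈ H and u ∈ U. -/

import Mathlib

open Matrix

section PatternGroups

variable (F : Type) [Field F] (E : Type) [Field E] [Algebra F E] {n : ℕ}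

/-- The pattern subalgebra `𝔤 ⊆ 𝔲𝔱_n(E)` of matrices supported on the set `S` of strict
relations `i ≺ j` of a subposet of the usual linear order on `[n]`. -/
def patAlg (S : Set (Fin n × Fin n)) : Set (Matrix (Fin n) (Fin n) E) :=
  {x | ∀ i j : Fin n, (i, j) ∉ S → x i j = 0}

/-- The pattern subgroup `G = 1 + 𝔤`. -/
def patGrp (S : Set (Fin n × Fin n)) : Set (Matrix (Fin n) (Fin n) E) :=
  {g | ∃ x ∈ patAlg E S, g = 1 + x}

/-- The two-sided ideal `𝔥 = {x ∈ 𝔤 | x_{ij} = 0 if j ≤ n/2}` (indices read 1-based). -/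
def patHAlg (S : Set (Fin n × Fin n)) : Set (Matrix (Fin n) (Fin n) E) :=
  {x | x ∈ patAlg E S ∧ ∀ i j : Fin n, (j : ℕ) + 1 ≤ n / 2 → x i j = 0}

/-- The normal subgroup `H = 1 + 𝔥` of `G`. -/
def patHGrp (S : Set (Fin n × Fin n)) : Set (Matrix (Fin n) (Fin n) E) :=
  {g | ∃ x ∈ patHAlg E S, g = 1 + x}

/-- The extension of `†` from `𝔤` to `G = 1 + 𝔤`: `(1+x)† = 1 + x†`. -/
def dagGrp (dag : Matrix (Fin n) (Fin n) E → Matrix (Fin n) (Fin n) E)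
    (g : Matrix (Fin n) (Fin n) E) : Matrix (Fin n) (Fin n) E :=
  1 + dag (g - 1)

/-- The subgroup `U = {u ∈ G | u† = u⁻¹}` of the pattern group `G`. -/
def patUGrp (S : Set (Fin n × Fin n))
    (dag : Matrix (Fin n) (Fin n) E → Matrix (Fin n) (Fin n) E) :
    Set (Matrix (Fin n) (Fin n) E) :=
  {u | u ∈ patGrp E S ∧ u * dagGrp E dag u = 1 ∧ dagGrp E dag u * u = 1}

/-- The set `𝔲 = {x ∈ 𝔤 | x† = -x}`. -/
def patUAlg (S : Set (Fin n × Fin n))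
    (dag : Matrix (Fin n) (Fin n) E → Matrix (Fin n) (Fin n) E) :
    Set (Matrix (Fin n) (Fin n) E) :=
  {x | x ∈ patAlg E S ∧ dag x = -x}

/-- `†` is an involutive `F`-algebra antiautomorphism of the pattern algebra `𝔤` sending
each `α e_{ij}` (`α ∈ E^×`) into `E^× e_{\bar j \bar i}`, where `\bar i = n + 1 - i`. -/
structure IsPatternAntiInvolution (S : Set (Fin n × Fin n))
    (dag : Matrix (Fin n) (Fin n) E → Matrix (Fin n) (Fin n) E) : Prop where
  map_mem : ∀ x ∈ patAlg E S, dag x ∈ patAlg E S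
  map_add : ∀ x ∈ patAlg E S, ∀ y ∈ patAlg E S, dag (x + y) = dag x + dag y
  map_smul : ∀ (c : F), ∀ x ∈ patAlg E S,
    dag (algebraMap F E c • x) = algebraMap F E c • dag x
  map_mul : ∀ x ∈ patAlg E S, ∀ y ∈ patAlg E S, dag (x * y) = dag y * dag x
  invol : ∀ x ∈ patAlg E S, dag (dag x) = x
  elementary : ∀ i j : Fin n, (i, j) ∈ S → ∀ α : E, α ≠ 0 →
    ∃ β : E, β ≠ 0 ∧ dag (Matrix.single i j α) = Matrix.single j.rev i.rev β

/-- A Springer morphism: a bijection `f : G → 𝔤` with `f(U) = 𝔲` and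
`f(1+x) = x + Σ_{i ≥ 2} a_i x^i` with coefficients `a_i ∈ F`. -/
def IsSpringerMorphism (S : Set (Fin n × Fin n))
    (dag f : Matrix (Fin n) (Fin n) E → Matrix (Fin n) (Fin n) E) : Prop :=
  Set.BijOn f (patGrp E S) (patAlg E S) ∧
  f '' patUGrp E S dag = patUAlg E S dag ∧
  ∃ (N : ℕ) (a : ℕ → F), a 1 = 1 ∧
    ∀ x ∈ patAlg E S, f (1 + x) = ∑ i ∈ Finset.Ico 1 N, algebraMap F E (a i) • x ^ i

/-- The orbit `G · w = {g w g† | g ∈ G}` of `w` under the action `g · x = g x g†`. -/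
def patGrpDot (S : Set (Fin n × Fin n))
    (dag : Matrix (Fin n) (Fin n) E → Matrix (Fin n) (Fin n) E)
    (w : Matrix (Fin n) (Fin n) E) : Set (Matrix (Fin n) (Fin n) E) :=
  {z | ∃ g ∈ patGrp E S, z = g * w * dagGrp E dag g}

end PatternGroups

section Supercharacters

variable (F : Type) [Field F] (E : Type) [Field E] [Algebra F E] {n : ℕ}

/-- The orbit of `λ ∈ 𝔲*` under a subset `T ⊆ G` (for `T = G` or `T = H`), acting by
`(g·λ)(x) = λ(g⁻¹ · x) = λ(g⁻¹ x (g⁻¹)†)`.  An element `λ ∈ 𝔲*` is recorded as a function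
`𝔲 → F` (here represented via a functional `lam` on the full matrix space: only its values
on `𝔲` matter). -/
def patDualOrbit (S : Set (Fin n × Fin n))
    (dag : Matrix (Fin n) (Fin n) E → Matrix (Fin n) (Fin n) E)
    (T : Set (Matrix (Fin n) (Fin n) E))
    (lam : Module.Dual F (Matrix (Fin n) (Fin n) E)) :
    Set (↥(patUAlg E S dag) → F) :=
  {ψ | ∃ g ∈ T, ∀ x : ↥(patUAlg E S dag),
    ψ x = lam (g⁻¹ * (x : Matrix (Fin n) (Fin n) E) * dagGrp E dag g⁻¹)}

/-- The supercharacter `χ_λ = (|H·λ|/|G·λ|) Σ_{μ ∈ G·λ} θ ∘ μ ∘ f` of `U`, for `λ ∈ 𝔲*`. -/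
noncomputable def patSupchar (S : Set (Fin n × Fin n))
    (dag f : Matrix (Fin n) (Fin n) E → Matrix (Fin n) (Fin n) E)
    (θ : AddChar F ℂ) (lam : Module.Dual F (Matrix (Fin n) (Fin n) E))
    (u : Matrix (Fin n) (Fin n) E) : ℂ :=
  (Nat.card (patDualOrbit F E S dag (patHGrp E S) lam) : ℂ) /
    (Nat.card (patDualOrbit F E S dag (patGrp E S) lam) : ℂ) *
    ∑ᶠ ψ ∈ patDualOrbit F E S dag (patGrp E S) lam,
      @dite ℂ (f u ∈ patUAlg E S dag) (Classical.propDecidable _)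
        (fun h => θ (ψ ⟨f u, h⟩)) (fun _ => 0)

/-- The superclass `K_u = {v ∈ U | f(v) ∈ G · f(u)}` of `u`, as a subset of the ambient
matrix space. -/
def patSupclass (S : Set (Fin n × Fin n))
    (dag f : Matrix (Fin n) (Fin n) E → Matrix (Fin n) (Fin n) E)
    (u : Matrix (Fin n) (Fin n) E) : Set (Matrix (Fin n) (Fin n) E) :=
  {v | v ∈ patUGrp E S dag ∧ f v ∈ patGrpDot E S dag (f u)}

end Supercharacters

/-! `G = HU` amounts to writing every `†`-symmetric `s ∈ G` as `h h†` with `h ∈ H`: if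
`g g† = h h†` then `h⁻¹ g ∈ U`. Such an `h` is found by descending the superdiagonal filtration.
A symmetric `z ∈ 𝔤` splits as `a + a†` with `a ∈ 𝔥`: an entry whose column, or whose mirror's
column, is among the first `n / 2` goes wholly to `a†` resp. `a`, and every other entry is halved,
which needs odd characteristic. Then `(1 + a)⁻¹ (1 + z) (1 + a†)⁻¹` is again symmetric, and it
differs from `1` only one step deeper in the filtration. -/

section PatternGroupFactorization

variable {F : Type} [Field F] {E : Type} [Field E] [Algebra F E] {n : ℕ}
  {S : Set (Fin n × Fin n)}

def patAlgSubmodule (E : Type) [Field E] (S : Set (Fin n × Fin n)) :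
    Submodule E (Matrix (Fin n) (Fin n) E) where
  carrier := patAlg E S
  add_mem' hx hy i j h := by simp [hx i j h, hy i j h]
  zero_mem' _ _ _ := rfl
  smul_mem' c _ hx i j h := by simp [hx i j h]

lemma patAlg_mul (hS2 : ∀ i j k : Fin n, (i, j) ∈ S → (j, k) ∈ S → (i, k) ∈ S)
    {x y : Matrix (Fin n) (Fin n) E} (hx : x ∈ patAlg E S) (hy : y ∈ patAlg E S) :
    x * y ∈ patAlg E S := by
  intro i j hij
  refine (mul_apply ..).trans (Finset.sum_eq_zero fun k _ => ?_)
  by_cases hik : (i, k) ∈ S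
  · rw [hy k j fun hkj => hij (hS2 i k j hik hkj), mul_zero]
  · rw [hx i k hik, zero_mul]

lemma patAlg_pow_succ (hS2 : ∀ i j k : Fin n, (i, j) ∈ S → (j, k) ∈ S → (i, k) ∈ S)
    {x : Matrix (Fin n) (Fin n) E} (hx : x ∈ patAlg E S) (k : ℕ) : x ^ (k + 1) ∈ patAlg E S := by
  induction k with
  | zero => rwa [zero_add, pow_one]
  | succ k ih => rw [pow_succ]; exact patAlg_mul hS2 ih hx

lemma single_apply_mem_patAlg {x : Matrix (Fin n) (Fin n) E} (hx : x ∈ patAlg E S)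
    (i j : Fin n) : single i j (x i j) ∈ patAlg E S := by
  intro i' j' h
  by_cases hij : i = i' ∧ j = j'
  · obtain ⟨rfl, rfl⟩ := hij
    rw [single_apply_same, hx i j h]
  · exact single_apply_of_ne _ _ _ _ _ hij

lemma patHAlg_mul (hS2 : ∀ i j k : Fin n, (i, j) ∈ S → (j, k) ∈ S → (i, k) ∈ S)
    {x y : Matrix (Fin n) (Fin n) E} (hx : x ∈ patAlg E S) (hy : y ∈ patHAlg E S) :
    x * y ∈ patHAlg E S :=
  ⟨patAlg_mul hS2 hx hy.1, fun i j h =>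
    (mul_apply ..).trans (Finset.sum_eq_zero fun k _ => by rw [hy.2 k j h, mul_zero])⟩

def superdiagFiltration (E : Type) [Field E] (m : ℕ) : Submodule E (Matrix (Fin n) (Fin n) E) where
  carrier := {x | ∀ i j : Fin n, (j : ℕ) < i + m → x i j = 0}
  add_mem' hx hy i j h := by simp [hx i j h, hy i j h]
  zero_mem' _ _ _ := rfl
  smul_mem' c _ hx i j h := by simp [hx i j h]

lemma superdiagFiltration_antitone {a b : ℕ} (hab : a ≤ b) :
    superdiagFiltration (n := n) E b ≤ superdiagFiltration E a :=
  fun _ hx i j h => hx i j (by omega)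

lemma mul_mem_superdiagFiltration {a b : ℕ} {x y : Matrix (Fin n) (Fin n) E}
    (hx : x ∈ superdiagFiltration E a) (hy : y ∈ superdiagFiltration E b) :
    x * y ∈ superdiagFiltration E (a + b) := by
  intro i j hij
  refine (mul_apply ..).trans (Finset.sum_eq_zero fun k _ => ?_)
  by_cases hk : (k : ℕ) < i + a
  · rw [hx i k hk, zero_mul]
  · rw [hy k j (by omega), mul_zero]

lemma eq_zero_of_mem_superdiagFiltration {x : Matrix (Fin n) (Fin n) E}
    (hx : x ∈ superdiagFiltration E n) : x = 0 :=
  ext fun i j => hx i j (by omega)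

lemma one_mem_superdiagFiltration_zero : (1 : Matrix (Fin n) (Fin n) E) ∈ superdiagFiltration E 0 :=
  fun _ _ h => one_apply_ne (by rintro rfl; omega)

lemma mem_superdiagFiltration_max {a b : ℕ} {x : Matrix (Fin n) (Fin n) E}
    (ha : x ∈ superdiagFiltration E a) (hb : x ∈ superdiagFiltration E b) :
    x ∈ superdiagFiltration E (max a b) := by
  rcases le_total a b with hab | hab
  · rwa [max_eq_right hab]
  · rwa [max_eq_left hab]

lemma pow_mem_superdiagFiltration {x : Matrix (Fin n) (Fin n) E}
    (hx : x ∈ superdiagFiltration E 1) (k : ℕ) : x ^ k ∈ superdiagFiltration E k := by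
  induction k with
  | zero => exact one_mem_superdiagFiltration_zero
  | succ k ih => rw [pow_succ]; exact mul_mem_superdiagFiltration ih hx

lemma patAlg_le_superdiagFiltration (hS1 : ∀ p ∈ S, p.1 < p.2) {x : Matrix (Fin n) (Fin n) E}
    (hx : x ∈ patAlg E S) : x ∈ superdiagFiltration E 1 :=
  fun i j h => hx i j fun hij => by have := hS1 _ hij; simp only [Fin.lt_def] at this; omega

lemma pow_eq_zero_of_mem_patAlg (hS1 : ∀ p ∈ S, p.1 < p.2) {x : Matrix (Fin n) (Fin n) E}
    (hx : x ∈ patAlg E S) : x ^ n = 0 :=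
  eq_zero_of_mem_superdiagFiltration
    (pow_mem_superdiagFiltration (patAlg_le_superdiagFiltration hS1 hx) n)

lemma one_add_inv_eq_geom_sum {ι R : Type*} [Fintype ι] [DecidableEq ι] [CommRing R]
    {x : Matrix ι ι R} {m : ℕ} (hx : x ^ m = 0) :
    (1 + x)⁻¹ = ∑ k ∈ Finset.range m, (-x) ^ k :=
  inv_eq_left_inv (by rw [← sub_neg_eq_add, geom_sum_mul_neg, neg_pow, hx, mul_zero, sub_zero])

lemma one_mem_patGrp : (1 : Matrix (Fin n) (Fin n) E) ∈ patGrp E S :=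
  ⟨0, (patAlgSubmodule E S).zero_mem, (add_zero 1).symm⟩

lemma mul_mem_patGrp (hS2 : ∀ i j k : Fin n, (i, j) ∈ S → (j, k) ∈ S → (i, k) ∈ S)
    {g h : Matrix (Fin n) (Fin n) E} (hg : g ∈ patGrp E S) (hh : h ∈ patGrp E S) :
    g * h ∈ patGrp E S := by
  obtain ⟨x, hx, rfl⟩ := hg
  obtain ⟨y, hy, rfl⟩ := hh
  exact ⟨x + y + x * y, (patAlgSubmodule E S).add_mem ((patAlgSubmodule E S).add_mem hx hy)
    (patAlg_mul hS2 hx hy), by noncomm_ring⟩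

lemma isUnit_det_of_mem_patGrp (hS1 : ∀ p ∈ S, p.1 < p.2) {g : Matrix (Fin n) (Fin n) E}
    (hg : g ∈ patGrp E S) : IsUnit g.det := by
  obtain ⟨x, hx, rfl⟩ := hg
  exact (isUnit_iff_isUnit_det _).mp
    (IsNilpotent.isUnit_one_add ⟨n, pow_eq_zero_of_mem_patAlg hS1 hx⟩)

lemma inv_mem_patGrp (hS1 : ∀ p ∈ S, p.1 < p.2)
    (hS2 : ∀ i j k : Fin n, (i, j) ∈ S → (j, k) ∈ S → (i, k) ∈ S)
    {g : Matrix (Fin n) (Fin n) E} (hg : g ∈ patGrp E S) : g⁻¹ ∈ patGrp E S := by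
  obtain ⟨x, hx, rfl⟩ := hg
  have hx' : x ^ (n + 1) = 0 := by rw [pow_succ, pow_eq_zero_of_mem_patAlg hS1 hx, zero_mul]
  refine ⟨∑ k ∈ Finset.range n, (-x) ^ (k + 1), (patAlgSubmodule E S).sum_mem
    fun k _ => patAlg_pow_succ hS2 ((patAlgSubmodule E S).neg_mem hx) k, ?_⟩
  rw [one_add_inv_eq_geom_sum hx', Finset.sum_range_succ', pow_zero, add_comm]

lemma patGrp_le_superdiagFiltration_zero (hS1 : ∀ p ∈ S, p.1 < p.2)
    {g : Matrix (Fin n) (Fin n) E} (hg : g ∈ patGrp E S) : g ∈ superdiagFiltration E 0 := by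
  obtain ⟨x, hx, rfl⟩ := hg
  exact add_mem one_mem_superdiagFiltration_zero
    (superdiagFiltration_antitone (Nat.zero_le 1) (patAlg_le_superdiagFiltration hS1 hx))

lemma one_mem_patHGrp : (1 : Matrix (Fin n) (Fin n) E) ∈ patHGrp E S :=
  ⟨0, ⟨(patAlgSubmodule E S).zero_mem, fun _ _ _ => rfl⟩, (add_zero 1).symm⟩

lemma mem_patGrp_of_mem_patHGrp {h : Matrix (Fin n) (Fin n) E} (hh : h ∈ patHGrp E S) :
    h ∈ patGrp E S := by
  obtain ⟨a, ha, rfl⟩ := hh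
  exact ⟨a, ha.1, rfl⟩

lemma mul_mem_patHGrp (hS2 : ∀ i j k : Fin n, (i, j) ∈ S → (j, k) ∈ S → (i, k) ∈ S)
    {g h : Matrix (Fin n) (Fin n) E} (hg : g ∈ patHGrp E S) (hh : h ∈ patHGrp E S) :
    g * h ∈ patHGrp E S := by
  obtain ⟨a, ha, rfl⟩ := hg
  obtain ⟨b, hb, rfl⟩ := hh
  have hab : a + b ∈ patHAlg E S :=
    ⟨(patAlgSubmodule E S).add_mem ha.1 hb.1, fun i j h => by simp [ha.2 i j h, hb.2 i j h]⟩
  refine ⟨a + b + a * b, ⟨(patAlgSubmodule E S).add_mem hab.1 (patHAlg_mul hS2 ha.1 hb).1,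
    fun i j h => ?_⟩, by noncomm_ring⟩
  simp [hab.2 i j h, (patHAlg_mul hS2 ha.1 hb).2 i j h]

lemma dagGrp_one_add (dag : Matrix (Fin n) (Fin n) E → Matrix (Fin n) (Fin n) E)
    (x : Matrix (Fin n) (Fin n) E) : dagGrp E dag (1 + x) = 1 + dag x := by
  rw [dagGrp, add_sub_cancel_left]

namespace IsPatternAntiInvolution

variable {dag : Matrix (Fin n) (Fin n) E → Matrix (Fin n) (Fin n) E}

lemma map_zero (hdag : IsPatternAntiInvolution F E S dag) : dag 0 = 0 := by
  simpa using hdag.map_add 0 (patAlgSubmodule E S).zero_mem 0 (patAlgSubmodule E S).zero_mem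

lemma map_sum (hdag : IsPatternAntiInvolution F E S dag) {ι : Type*} (s : Finset ι)
    {f : ι → Matrix (Fin n) (Fin n) E} (hf : ∀ i ∈ s, f i ∈ patAlg E S) :
    dag (∑ i ∈ s, f i) = ∑ i ∈ s, dag (f i) := by
  classical
  induction s using Finset.induction_on with
  | empty => simpa using hdag.map_zero
  | insert a s ha ih =>
    have hs : ∀ i ∈ s, f i ∈ patAlg E S := fun i hi => hf i (Finset.mem_insert_of_mem hi)
    rw [Finset.sum_insert ha, Finset.sum_insert ha,
      hdag.map_add _ (hf a (Finset.mem_insert_self a s)) _ ((patAlgSubmodule E S).sum_mem hs),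
      ih hs]

lemma map_single_apply_eq_zero (hdag : IsPatternAntiInvolution F E S dag)
    {x : Matrix (Fin n) (Fin n) E} (hx : x ∈ patAlg E S) {i j i' j' : Fin n}
    (h : (i, j) ≠ (j'.rev, i'.rev)) : dag (single i j (x i j)) i' j' = 0 := by
  by_cases hxij : x i j = 0
  · rw [hxij, single_zero, hdag.map_zero, Matrix.zero_apply]
  obtain ⟨β, -, hβ⟩ := hdag.elementary i j (by_contra fun hS => hxij (hx i j hS)) _ hxij
  rw [hβ]
  refine single_apply_of_ne _ _ _ _ _ ?_
  rintro ⟨rfl, rfl⟩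
  simp at h

lemma apply_eq (hdag : IsPatternAntiInvolution F E S dag) {x : Matrix (Fin n) (Fin n) E}
    (hx : x ∈ patAlg E S) (i j : Fin n) :
    dag x i j = dag (single j.rev i.rev (x j.rev i.rev)) i j := by
  have hsingle : ∀ p : Fin n × Fin n, single p.1 p.2 (x p.1 p.2) ∈ patAlg E S :=
    fun p => single_apply_mem_patAlg hx p.1 p.2
  conv_lhs => rw [matrix_eq_sum_single x, ← Fintype.sum_prod_type']
  rw [hdag.map_sum _ fun p _ => hsingle p, Matrix.sum_apply,
    Fintype.sum_eq_single (j.rev, i.rev) fun p hp => hdag.map_single_apply_eq_zero hx hp]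

lemma map_mem_superdiagFiltration (hdag : IsPatternAntiInvolution F E S dag)
    {x : Matrix (Fin n) (Fin n) E} (hx : x ∈ patAlg E S) {m : ℕ}
    (hxm : x ∈ superdiagFiltration E m) : dag x ∈ superdiagFiltration E m := by
  intro i j hij
  have : x j.rev i.rev = 0 := hxm _ _ (by rw [Fin.val_rev, Fin.val_rev]; omega)
  rw [hdag.apply_eq hx, this, single_zero, hdag.map_zero, Matrix.zero_apply]

lemma dagGrp_mem (hdag : IsPatternAntiInvolution F E S dag) {g : Matrix (Fin n) (Fin n) E}
    (hg : g ∈ patGrp E S) : dagGrp E dag g ∈ patGrp E S := by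
  obtain ⟨x, hx, rfl⟩ := hg
  exact ⟨dag x, hdag.map_mem x hx, dagGrp_one_add dag x⟩

lemma dagGrp_one (hdag : IsPatternAntiInvolution F E S dag) : dagGrp E dag 1 = 1 := by
  rw [dagGrp, sub_self, hdag.map_zero, add_zero]

lemma dagGrp_mul (hdag : IsPatternAntiInvolution F E S dag)
    (hS2 : ∀ i j k : Fin n, (i, j) ∈ S → (j, k) ∈ S → (i, k) ∈ S)
    {g h : Matrix (Fin n) (Fin n) E} (hg : g ∈ patGrp E S) (hh : h ∈ patGrp E S) :
    dagGrp E dag (g * h) = dagGrp E dag h * dagGrp E dag g := by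
  obtain ⟨x, hx, rfl⟩ := hg
  obtain ⟨y, hy, rfl⟩ := hh
  have hxy : x + y ∈ patAlg E S := (patAlgSubmodule E S).add_mem hx hy
  rw [show (1 + x) * (1 + y) = 1 + (x + y + x * y) by noncomm_ring, dagGrp_one_add,
    dagGrp_one_add, dagGrp_one_add, hdag.map_add _ hxy _ (patAlg_mul hS2 hx hy),
    hdag.map_add _ hx _ hy, hdag.map_mul _ hx _ hy]
  noncomm_ring

lemma dagGrp_dagGrp (hdag : IsPatternAntiInvolution F E S dag) {g : Matrix (Fin n) (Fin n) E}
    (hg : g ∈ patGrp E S) : dagGrp E dag (dagGrp E dag g) = g := by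
  obtain ⟨x, hx, rfl⟩ := hg
  rw [dagGrp_one_add, dagGrp_one_add, hdag.invol x hx]

lemma dagGrp_inv (hdag : IsPatternAntiInvolution F E S dag) (hS1 : ∀ p ∈ S, p.1 < p.2)
    (hS2 : ∀ i j k : Fin n, (i, j) ∈ S → (j, k) ∈ S → (i, k) ∈ S)
    {g : Matrix (Fin n) (Fin n) E} (hg : g ∈ patGrp E S) :
    dagGrp E dag g⁻¹ = (dagGrp E dag g)⁻¹ := by
  refine (inv_eq_left_inv ?_).symm
  rw [← hdag.dagGrp_mul hS2 hg (inv_mem_patGrp hS1 hS2 hg),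
    mul_nonsing_inv _ (isUnit_det_of_mem_patGrp hS1 hg), hdag.dagGrp_one]

lemma dagGrp_mul_mul_dagGrp (hdag : IsPatternAntiInvolution F E S dag)
    (hS2 : ∀ i j k : Fin n, (i, j) ∈ S → (j, k) ∈ S → (i, k) ∈ S)
    {g s : Matrix (Fin n) (Fin n) E} (hg : g ∈ patGrp E S) (hs : s ∈ patGrp E S)
    (hsd : dagGrp E dag s = s) :
    dagGrp E dag (g * s * dagGrp E dag g) = g * s * dagGrp E dag g := by
  rw [hdag.dagGrp_mul hS2 (mul_mem_patGrp hS2 hg hs) (hdag.dagGrp_mem hg),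
    hdag.dagGrp_mul hS2 hg hs, hdag.dagGrp_dagGrp hg, hsd, mul_assoc]

lemma map_entrywise_smul_apply (hdag : IsPatternAntiInvolution F E S dag)
    {z : Matrix (Fin n) (Fin n) E} (hz : z ∈ patAlg E S) (w : Fin n → Fin n → F) (i j : Fin n) :
    dag (of fun i j => algebraMap F E (w i j) * z i j) i j =
      algebraMap F E (w j.rev i.rev) * dag z i j := by
  have ha : (of fun i j => algebraMap F E (w i j) * z i j) ∈ patAlg E S :=
    fun i j h => by simp [hz i j h]
  rw [hdag.apply_eq ha, hdag.apply_eq hz, of_apply, ← smul_eq_mul, ← smul_single,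
    hdag.map_smul _ _ (single_apply_mem_patAlg hz _ _), Matrix.smul_apply, smul_eq_mul]

lemma exists_patHAlg_add_eq (hdag : IsPatternAntiInvolution F E S dag)
    (hS1 : ∀ p ∈ S, p.1 < p.2) (h2 : (2 : F) ≠ 0) {z : Matrix (Fin n) (Fin n) E}
    (hz : z ∈ patAlg E S) (hzd : dag z = z) {m : ℕ} (hzm : z ∈ superdiagFiltration E m) :
    ∃ a ∈ patHAlg E S, a ∈ superdiagFiltration E m ∧ a + dag a = z := by
  let w : Fin n → Fin n → F := fun i j =>
    if (j : ℕ) + 1 ≤ n / 2 then 0 else if (i.rev : ℕ) + 1 ≤ n / 2 then 1 else 2⁻¹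
  have hw : ∀ i j : Fin n, i < j → w i j + w j.rev i.rev = 1 := by
    intro i j hij
    have := Fin.lt_def.mp hij
    have := Fin.val_rev i
    have := Fin.val_rev j
    simp only [w, Fin.rev_rev]
    split_ifs <;> first | omega | simp | rw [← two_mul, mul_inv_cancel₀ h2]
  refine ⟨of fun i j => algebraMap F E (w i j) * z i j, ⟨fun i j h => by simp [hz i j h],
    fun i j h => by simp only [of_apply, w, if_pos h, _root_.map_zero, zero_mul]⟩,
    fun i j h => by simp [hzm i j h], ?_⟩
  ext i j
  rw [Matrix.add_apply, hdag.map_entrywise_smul_apply hz, hzd, of_apply, ← add_mul,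
    ← _root_.map_add]
  by_cases hS : (i, j) ∈ S
  · rw [hw i j (hS1 _ hS), _root_.map_one, one_mul]
  · rw [hz i j hS, mul_zero]

lemma exists_patHGrp_inv_mul_mul_dagGrp_sub_one_mem (hdag : IsPatternAntiInvolution F E S dag)
    (hS1 : ∀ p ∈ S, p.1 < p.2) (hS2 : ∀ i j k : Fin n, (i, j) ∈ S → (j, k) ∈ S → (i, k) ∈ S)
    (h2 : (2 : F) ≠ 0) {s : Matrix (Fin n) (Fin n) E} (hs : s ∈ patGrp E S)
    (hsd : dagGrp E dag s = s) {k : ℕ} (hsk : s - 1 ∈ superdiagFiltration E k) :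
    ∃ h ∈ patHGrp E S, h⁻¹ * s * dagGrp E dag h⁻¹ - 1 ∈ superdiagFiltration E (k + 1) := by
  obtain ⟨z, hz, rfl⟩ := hs
  rw [add_sub_cancel_left] at hsk
  rw [dagGrp_one_add] at hsd
  obtain ⟨a, haH, hak, rfl⟩ := hdag.exists_patHAlg_add_eq hS1 h2 hz (add_left_cancel hsd) hsk
  have hG : 1 + a ∈ patGrp E S := ⟨a, haH.1, rfl⟩
  have hG' : 1 + dag a ∈ patGrp E S := dagGrp_one_add dag a ▸ hdag.dagGrp_mem hG
  refine ⟨1 + a, ⟨a, haH, rfl⟩, ?_⟩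
  have ha1 := patAlg_le_superdiagFiltration hS1 haH.1
  have hda1 := patAlg_le_superdiagFiltration hS1 (hdag.map_mem a haH.1)
  -- `1 + (a + a†)` and `(1 + a)(1 + a†)` differ by `a a†`, which lies deeper in the filtration.
  have hprod : a * dag a ∈ superdiagFiltration E (k + 1) :=
    superdiagFiltration_antitone (by omega) (mul_mem_superdiagFiltration
      (mem_superdiagFiltration_max hak ha1)
      (mem_superdiagFiltration_max (hdag.map_mem_superdiagFiltration haH.1 hak) hda1))
  have hP := nonsing_inv_mul _ (isUnit_det_of_mem_patGrp hS1 hG)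
  have hQ := mul_nonsing_inv _ (isUnit_det_of_mem_patGrp hS1 hG')
  have hdiff : (1 + a)⁻¹ * (1 + (a + dag a)) * (1 + dag a)⁻¹ - 1 =
      -((1 + a)⁻¹ * (a * dag a) * (1 + dag a)⁻¹) := by
    calc _ = ((1 + a)⁻¹ * (1 + a)) * ((1 + dag a) * (1 + dag a)⁻¹) -
          (1 + a)⁻¹ * (a * dag a) * (1 + dag a)⁻¹ - 1 := by noncomm_ring
      _ = _ := by rw [hP, hQ]; noncomm_ring
  rw [hdag.dagGrp_inv hS1 hS2 hG, dagGrp_one_add, hdiff]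
  have := mul_mem_superdiagFiltration (mul_mem_superdiagFiltration
    (patGrp_le_superdiagFiltration_zero hS1 (inv_mem_patGrp hS1 hS2 hG)) hprod)
    (patGrp_le_superdiagFiltration_zero hS1 (inv_mem_patGrp hS1 hS2 hG'))
  rw [zero_add, add_zero] at this
  exact neg_mem this

lemma exists_patHGrp_mul_dagGrp_eq (hdag : IsPatternAntiInvolution F E S dag)
    (hS1 : ∀ p ∈ S, p.1 < p.2) (hS2 : ∀ i j k : Fin n, (i, j) ∈ S → (j, k) ∈ S → (i, k) ∈ S)
    (h2 : (2 : F) ≠ 0) {s : Matrix (Fin n) (Fin n) E} (hs : s ∈ patGrp E S)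
    (hsd : dagGrp E dag s = s) : ∃ h ∈ patHGrp E S, h * dagGrp E dag h = s := by
  suffices ∀ m, ∀ s ∈ patGrp E S, dagGrp E dag s = s → s - 1 ∈ superdiagFiltration E (n - m) →
      ∃ h ∈ patHGrp E S, h * dagGrp E dag h = s by
    refine this n s hs hsd ?_
    rw [Nat.sub_self]
    exact sub_mem (patGrp_le_superdiagFiltration_zero hS1 hs) one_mem_superdiagFiltration_zero
  intro m
  induction m with
  | zero =>
    intro s _ _ hs1
    refine ⟨1, one_mem_patHGrp, ?_⟩
    rw [hdag.dagGrp_one, mul_one, eq_comm, ← sub_eq_zero]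
    exact eq_zero_of_mem_superdiagFiltration hs1
  | succ m ih =>
    intro s hs hsd hsm
    obtain ⟨h, hH, hred⟩ :=
      hdag.exists_patHGrp_inv_mul_mul_dagGrp_sub_one_mem hS1 hS2 h2 hs hsd hsm
    have hG := mem_patGrp_of_mem_patHGrp hH
    have hinv := inv_mem_patGrp hS1 hS2 hG
    obtain ⟨h', hH', hh'⟩ := ih _
      (mul_mem_patGrp hS2 (mul_mem_patGrp hS2 hinv hs) (hdag.dagGrp_mem hinv))
      (hdag.dagGrp_mul_mul_dagGrp hS2 hinv hs hsd) (superdiagFiltration_antitone (by omega) hred)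
    refine ⟨h * h', mul_mem_patHGrp hS2 hH hH', ?_⟩
    calc h * h' * dagGrp E dag (h * h') = h * (h' * dagGrp E dag h') * dagGrp E dag h := by
          rw [hdag.dagGrp_mul hS2 hG (mem_patGrp_of_mem_patHGrp hH')]; simp only [mul_assoc]
      _ = h * h⁻¹ * s * dagGrp E dag (h * h⁻¹) := by
          rw [hh', hdag.dagGrp_mul hS2 hG hinv]; simp only [mul_assoc]
      _ = s := by
          rw [mul_nonsing_inv _ (isUnit_det_of_mem_patGrp hS1 hG), hdag.dagGrp_one, one_mul,
            mul_one]

lemma inv_mul_mem_patUGrp (hdag : IsPatternAntiInvolution F E S dag)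
    (hS1 : ∀ p ∈ S, p.1 < p.2) (hS2 : ∀ i j k : Fin n, (i, j) ∈ S → (j, k) ∈ S → (i, k) ∈ S)
    {g h : Matrix (Fin n) (Fin n) E} (hg : g ∈ patGrp E S) (hh : h ∈ patGrp E S)
    (hgh : h * dagGrp E dag h = g * dagGrp E dag g) : h⁻¹ * g ∈ patUGrp E S dag := by
  have hinv := inv_mem_patGrp hS1 hS2 hh
  have hu : h⁻¹ * g * dagGrp E dag (h⁻¹ * g) = 1 := by
    calc h⁻¹ * g * dagGrp E dag (h⁻¹ * g) = h⁻¹ * (g * dagGrp E dag g) * dagGrp E dag h⁻¹ := by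
          rw [hdag.dagGrp_mul hS2 hinv hg]; simp only [mul_assoc]
      _ = h⁻¹ * h * dagGrp E dag (h⁻¹ * h) := by
          rw [← hgh, hdag.dagGrp_mul hS2 hinv hh]; simp only [mul_assoc]
      _ = 1 := by rw [nonsing_inv_mul _ (isUnit_det_of_mem_patGrp hS1 hh), hdag.dagGrp_one, one_mul]
  exact ⟨mul_mem_patGrp hS2 hinv hg, hu, mul_eq_one_comm.mp hu⟩

end IsPatternAntiInvolution

end PatternGroupFactorization

theorem pattern_group_eq_H_mul_U_general
    (F : Type) [Field F] (E : Type) [Field E] [Algebra F E]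
    (hodd : ringChar F ≠ 2)
    {n : ℕ} (S : Set (Fin n × Fin n))
    (hS1 : ∀ p ∈ S, p.1 < p.2)
    (hS2 : ∀ i j k : Fin n, (i, j) ∈ S → (j, k) ∈ S → (i, k) ∈ S)
    (dag : Matrix (Fin n) (Fin n) E → Matrix (Fin n) (Fin n) E)
    (hdag : IsPatternAntiInvolution F E S dag) :
    ∀ g ∈ patGrp E S, ∃ h ∈ patHGrp E S, ∃ u ∈ patUGrp E S dag, g = h * u := by
  intro g hg
  obtain ⟨h, hH, hgh⟩ := hdag.exists_patHGrp_mul_dagGrp_eq hS1 hS2 (Ring.two_ne_zero hodd)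
    (mul_mem_patGrp hS2 hg (hdag.dagGrp_mem hg))
    (by simpa only [mul_one] using hdag.dagGrp_mul_mul_dagGrp hS2 hg one_mem_patGrp hdag.dagGrp_one)
  have hG := mem_patGrp_of_mem_patHGrp hH
  refine ⟨h, hH, h⁻¹ * g, hdag.inv_mul_mem_patUGrp hS1 hS2 hg hG hgh, ?_⟩
  rw [← mul_assoc, mul_nonsing_inv _ (isUnit_det_of_mem_patGrp hS1 hG), one_mul]

/-- With `G = 1 + 𝔤` a pattern subgroup, `†` an anti-involution as above,
`U = {u ∈ G | u† = u⁻¹}`, `𝔥 = {x ∈ 𝔤 | x_ij = 0 if j ≤ n/2}` and `H = 1 + 𝔥`: `G = HU`,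
i.e. every element of `G` can be written as `hu` with `h ∈ H` and `u ∈ U`. -/
theorem pattern_group_eq_H_mul_U
    (F : Type) [Field F] [Fintype F] (E : Type) [Field E] [Fintype E] [Algebra F E]
    (hodd : ringChar F ≠ 2)
    {n : ℕ} (S : Set (Fin n × Fin n))
    (hS1 : ∀ p ∈ S, p.1 < p.2)
    (hS2 : ∀ i j k : Fin n, (i, j) ∈ S → (j, k) ∈ S → (i, k) ∈ S)
    (dag : Matrix (Fin n) (Fin n) E → Matrix (Fin n) (Fin n) E)
    (hdag : IsPatternAntiInvolution F E S dag) :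
    ∀ g ∈ patGrp E S, ∃ h ∈ patHGrp E S, ∃ u ∈ patUGrp E S dag, g = h * u :=
  pattern_group_eq_H_mul_U_general F E hodd S hS1 hS2 dag hdag
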